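/- Let A be commutative. Then every non-zero two-sided ideal I of A ⋊_α^σ G satisfies I ∩ Comm(Ã) ≠ {0}. In particular, if Ã is maximal commutative, then I ∩ Ã ≠ {0} for every non-zero two-sided ideal I. -/
import Mathlib


/-- A `G`-crossed system `{A, G, σ, α}`: a unital ring `A`, a group `G`,
`σ : G → Aut(A)` and a `σ`-cocycle `α : G × G → U(A)` satisfying the
crossed-system axioms (i)-(iii). -/
structure CrossedSystem (A : Type*) [Ring A] (G : Type*) [Group G] where
  σ : G → RingAut A
  α : G → G → Aˣ
  compat : ∀ x y : G, ∀ a : A,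
    σ x (σ y a) = (α x y : A) * σ (x * y) a * ((α x y)⁻¹ : Aˣ)
  cocycle : ∀ x y z : G,
    (α x y : A) * (α (x * y) z : A) = σ x (α y z : A) * (α x (y * z) : A)
  unit_right : ∀ x : G, α x 1 = 1
  unit_left : ∀ x : G, α 1 x = 1

variable {A : Type*} [CommRing A] {G : Type*} [Group G]

/-- Multiplication of the crossed product `A ⋊_α^σ G`, realized on the free
left `A`-module `G →₀ A`: `(a x̄)(b ȳ) = a σ_x(b) α(x,y) (x*y)‾`. -/
noncomputable def cmul (C : CrossedSystem A G) (f g : G →₀ A) : G →₀ A :=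
  f.sum fun s a => g.sum fun t b =>
    Finsupp.single (s * t) (a * C.σ s b * (C.α s t : A))

/-- The element `1_A ē` of the crossed product. -/
noncomputable def cone : G →₀ A := Finsupp.single 1 1

/-- The canonical embedding `ι : A → A ⋊_α^σ G`, `a ↦ a ē`; its range is `Ã`. -/
noncomputable def cemb (a : A) : G →₀ A := Finsupp.single 1 a

/-- The commutant `Comm(Ã)` of the embedded base ring in the crossed product. -/
noncomputable def cCommutant (C : CrossedSystem A G) : Set (G →₀ A) :=
  {x | ∀ a : A, cmul C (cemb a) x = cmul C x (cemb a)}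

/-- `I` is a (non-unital) two-sided ideal of the crossed product `A ⋊_α^σ G`. -/
def cIsIdeal (C : CrossedSystem A G) (I : Set (G →₀ A)) : Prop :=
  0 ∈ I ∧ (∀ x ∈ I, ∀ y ∈ I, x + y ∈ I) ∧ (∀ x ∈ I, -x ∈ I) ∧
    (∀ x ∈ I, ∀ y : G →₀ A, cmul C y x ∈ I ∧ cmul C x y ∈ I)

lemma sigma_one (C : CrossedSystem A G) (a : A) : C.σ 1 a = a := by
  have h := C.compat 1 1 a
  simp [C.unit_left] at h
  exact h

lemma mulL (C : CrossedSystem A G) (a : A) (g : G →₀ A) (s : G) :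
    cmul C (cemb a) g s = a * g s := by
  classical
  unfold cmul cemb
  rw [Finsupp.sum_single_index (by simp)]
  simp only [sigma_one, C.unit_left, Units.val_one, mul_one, one_mul]
  rw [Finsupp.sum_apply, Finsupp.sum]
  simp only [Finsupp.single_apply]
  rw [Finset.sum_ite_eq' g.support s fun t => a * g t]
  by_cases h : s ∈ g.support
  · simp [h]
  · simp [h, Finsupp.notMem_support_iff.mp h]

lemma mulR (C : CrossedSystem A G) (a : A) (g : G →₀ A) (s : G) :
    cmul C g (cemb a) s = g s * C.σ s a := by
  classical
  unfold cmul cemb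
  rw [Finsupp.sum_apply, Finsupp.sum]
  have key : ∀ u : G, ((Finsupp.single (1:G) a).sum fun t b =>
      Finsupp.single (u * t) (g u * C.σ u b * (C.α u t : A))) s
      = if u = s then g u * C.σ u a else 0 := by
    intro u
    rw [Finsupp.sum_single_index (by simp)]
    simp only [C.unit_right, Units.val_one, mul_one, Finsupp.single_apply]
  rw [Finset.sum_congr rfl fun u _ => key u]
  rw [Finset.sum_ite_eq' g.support s fun u => g u * C.σ u a]
  by_cases h : s ∈ g.support
  · simp [h]
  · simp [h, Finsupp.notMem_support_iff.mp h]

lemma trR (C : CrossedSystem A G) (g : G →₀ A) (t u : G) :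
    cmul C g (Finsupp.single t (1:A)) u = g (u * t⁻¹) * (C.α (u * t⁻¹) t : A) := by
  classical
  unfold cmul
  rw [Finsupp.sum_apply, Finsupp.sum]
  have key : ∀ v : G, ((Finsupp.single t (1:A)).sum fun w b =>
      Finsupp.single (v * w) (g v * C.σ v b * (C.α v w : A))) u
      = if v = u * t⁻¹ then g v * (C.α v t : A) else 0 := by
    intro v
    rw [Finsupp.sum_single_index (by simp)]
    simp only [map_one, mul_one, Finsupp.single_apply]
    congr 1
    simp [eq_comm, mul_inv_eq_iff_eq_mul, eq_mul_inv_iff_mul_eq]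
  rw [Finset.sum_congr rfl fun v _ => key v]
  rw [Finset.sum_ite_eq' g.support (u * t⁻¹) fun v => g v * (C.α v t : A)]
  by_cases h : u * t⁻¹ ∈ g.support
  · simp [h]
  · simp [h, Finsupp.notMem_support_iff.mp h]

theorem stmt_17 (C : CrossedSystem A G) (I : Set (G →₀ A))
    (hI : cIsIdeal C I) (hne : ∃ x ∈ I, x ≠ 0) :
    (∃ x, x ∈ I ∧ x ∈ cCommutant C ∧ x ≠ 0) ∧
    (cCommutant C = Set.range (cemb (A := A) (G := G)) →
      ∃ x, x ∈ I ∧ x ∈ Set.range (cemb (A := A) (G := G)) ∧ x ≠ 0) := by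
  classical
  have hex : ∃ n, ∃ x, x ∈ I ∧ x ≠ 0 ∧ x.support.card = n := by
    obtain ⟨x, hx, hx0⟩ := hne; exact ⟨_, x, hx, hx0, rfl⟩
  set n := Nat.find hex with hn
  obtain ⟨x0, hx0I, hx00, hx0c⟩ := Nat.find_spec hex
  have hmin : ∀ y : G →₀ A, y ∈ I → y ≠ 0 → n ≤ y.support.card := by
    intro y hy hy0
    exact Nat.find_min' hex ⟨y, hy, hy0, rfl⟩
  obtain ⟨s0, hs0⟩ := Finsupp.support_nonempty_iff.mpr hx00
  set x1 := cmul C x0 (Finsupp.single s0⁻¹ (1:A)) with hx1def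
  have hx1I : x1 ∈ I := (hI.2.2.2 x0 hx0I _).2
  have hx1at : ∀ u, x1 u = x0 (u * s0) * (C.α (u * s0) s0⁻¹ : A) := by
    intro u; rw [hx1def, trR]; simp
  have hx1mem : ∀ u, u ∈ x1.support ↔ u * s0 ∈ x0.support := by
    intro u
    simp only [Finsupp.mem_support_iff, hx1at u]
    constructor
    · intro h hc; exact h (by rw [hc, zero_mul])
    · intro h hc
      exact h ((Units.mul_left_eq_zero (C.α (u * s0) s0⁻¹)).mp hc)
  have h1mem : (1:G) ∈ x1.support := by rw [hx1mem]; simpa using hs0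
  have hx10 : x1 ≠ 0 := by
    intro h; rw [h] at h1mem; simp at h1mem
  have hcard : x1.support.card = n := by
    have him : x1.support = x0.support.image (· * s0⁻¹) := by
      ext u
      rw [Finset.mem_image, hx1mem]
      constructor
      · intro h; exact ⟨u * s0, h, by simp⟩
      · rintro ⟨v, hv, rfl⟩; simpa using hv
    rw [him, Finset.card_image_of_injective _ (mul_left_injective _), hx0c]
  have hcomm : x1 ∈ cCommutant C := by
    intro a
    set y := cmul C (cemb a) x1 - cmul C x1 (cemb a) with hy
    have hyI : y ∈ I := by
      have h1 := (hI.2.2.2 x1 hx1I (cemb a)).1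
      have h2 := (hI.2.2.2 x1 hx1I (cemb a)).2
      have := hI.2.1 _ h1 _ (hI.2.2.1 _ h2)
      simpa [hy, sub_eq_add_neg] using this
    have hyval : ∀ u, y u = x1 u * (a - C.σ u a) := by
      intro u
      rw [hy, Finsupp.sub_apply, mulL, mulR, mul_sub, mul_comm a (x1 u)]
    have hy1 : y 1 = 0 := by rw [hyval]; simp [sigma_one]
    have hsub : y.support ⊆ x1.support.erase 1 := by
      intro u hu
      rw [Finset.mem_erase]
      rw [Finsupp.mem_support_iff] at hu
      refine ⟨fun h => hu (h ▸ hy1), ?_⟩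
      rw [Finsupp.mem_support_iff]
      intro h
      exact hu (by rw [hyval, h, zero_mul])
    have hy0 : y = 0 := by
      by_contra h0
      have h1 := hmin y hyI h0
      have hlt : y.support.card < n :=
        lt_of_le_of_lt (Finset.card_le_card hsub)
          (by rw [← hcard]; exact Finset.card_erase_lt_of_mem h1mem)
      omega
    exact sub_eq_zero.mp (hy ▸ hy0)
  exact ⟨⟨x1, hx1I, hcomm, hx10⟩,
    fun hEq => ⟨x1, hx1I, hEq ▸ hcomm, hx10⟩⟩
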